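/- Let ρ be a risk measure that is consistent with convex order, defined on all finite-mean Borel probability measures on ℝ, let 𝐅 = (F₁,…,Fₙ) be an n-tuple of Borel probability measures on ℝ with finite first moments, and let Λ be an n×n doubly stochastic matrix. Then ρ̄(𝐅) = ρ̄(Λ⊗𝐅) = ρ(F₁⊕⋯⊕Fₙ). -/

import Mathlib

open MeasureTheory
open scoped ENNReal BigOperators

noncomputable section

/-- The `f`-aggregation set: laws of `f (X₁,…,Xₙ)` over all couplings with marginals `F`. -/
def aggSetF (n : ℕ) (f : (Fin n → ℝ) → ℝ) (F : Fin n → Measure ℝ) : Set (Measure ℝ) :=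
  {H | ∃ μ : Measure (Fin n → ℝ), IsProbabilityMeasure μ ∧
    (∀ i, μ.map (fun x => x i) = F i) ∧ H = μ.map f}

/-- The aggregation set for sums. -/
def aggSet (n : ℕ) (F : Fin n → Measure ℝ) : Set (Measure ℝ) :=
  aggSetF n (fun x => ∑ i, x i) F

/-- A symmetric function on `ℝⁿ`. -/
def IsSymmetricFn (n : ℕ) (f : (Fin n → ℝ) → ℝ) : Prop :=
  ∀ (π : Equiv.Perm (Fin n)) (x : Fin n → ℝ), f (x ∘ π) = f x

/-- Left-continuous quantile function of a measure on ℝ. -/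
def quantile (F : Measure ℝ) (p : ℝ) : ℝ :=
  sInf {x : ℝ | p ≤ (F (Set.Iic x)).toReal}

/-- The uniform probability measure on (0,1). -/
def uniform01 : Measure ℝ := volume.restrict (Set.Ioo (0 : ℝ) 1)

/-- Comonotonic sum F₁ ⊕ ⋯ ⊕ Fₙ : the law of ∑ Fᵢ⁻¹(U), U uniform on (0,1). -/
def comonoSum (n : ℕ) (F : Fin n → Measure ℝ) : Measure ℝ :=
  uniform01.map (fun u => ∑ i, quantile (F i) u)

/-- Convex order F ≺cx G. -/
def ConvexOrder (F G : Measure ℝ) : Prop :=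
  ∀ φ : ℝ → ℝ, ConvexOn ℝ Set.univ φ → Integrable φ F → Integrable φ G →
    ∫ x, φ x ∂F ≤ ∫ x, φ x ∂G

/-- Stochastic order F ≺st G, i.e. F((-∞,x]) ≥ G((-∞,x]) for all x. -/
def StOrder (F G : Measure ℝ) : Prop :=
  ∀ x : ℝ, G (Set.Iic x) ≤ F (Set.Iic x)

/-- Doubly stochastic matrix. -/
def DoublyStochastic {n : ℕ} (Λ : Matrix (Fin n) (Fin n) ℝ) : Prop :=
  (∀ i j, 0 ≤ Λ i j) ∧ (∀ i, ∑ j, Λ i j = 1) ∧ (∀ j, ∑ i, Λ i j = 1)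

/-- Distribution mixture Λ𝐅 : i-th component is ∑ⱼ Λᵢⱼ Fⱼ. -/
def distMix {n : ℕ} (Λ : Matrix (Fin n) (Fin n) ℝ) (F : Fin n → Measure ℝ) :
    Fin n → Measure ℝ :=
  fun i => ∑ j, ENNReal.ofReal (Λ i j) • F j

/-- Quantile mixture Λ⊗𝐅 : i-th component is the law of ∑ⱼ Λᵢⱼ Fⱼ⁻¹(U). -/
def quantileMix {n : ℕ} (Λ : Matrix (Fin n) (Fin n) ℝ) (F : Fin n → Measure ℝ) :
    Fin n → Measure ℝ :=
  fun i => uniform01.map (fun u => ∑ j, Λ i j * quantile (F j) u)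

/-- Worst-case value of a risk measure over the aggregation set, valued in EReal. -/
def worstCase (ρ : Measure ℝ → ℝ) (n : ℕ) (F : Fin n → Measure ℝ) : EReal :=
  sSup ((fun H => ((ρ H : ℝ) : EReal)) '' aggSet n F)

/-- Worst-case Value-at-Risk over the aggregation set, valued in EReal. -/
def worstVaR (p : ℝ) (n : ℕ) (F : Fin n → Measure ℝ) : EReal :=
  sSup ((fun G => ((quantile G p : ℝ) : EReal)) '' aggSet n F)

/-- The class M_D of distributions with a nonincreasing density on an interval support. -/
def MemMD (F : Measure ℝ) : Prop :=
  ∃ f : ℝ → ℝ, Measurable f ∧ (∀ x, 0 ≤ f x) ∧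
    F = volume.withDensity (fun x => ENNReal.ofReal (f x)) ∧
    ∃ s : Set ℝ, s.OrdConnected ∧ (∀ x, x ∉ s → f x = 0) ∧
      (∀ x ∈ s, ∀ y ∈ s, x ≤ y → f y ≤ f x)

/-- The class M_I of distributions with a nondecreasing density on an interval support. -/
def MemMI (F : Measure ℝ) : Prop :=
  ∃ f : ℝ → ℝ, Measurable f ∧ (∀ x, 0 ≤ f x) ∧
    F = volume.withDensity (fun x => ENNReal.ofReal (f x)) ∧
    ∃ s : Set ℝ, s.OrdConnected ∧ (∀ x, x ∉ s → f x = 0) ∧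
      (∀ x ∈ s, ∀ y ∈ s, x ≤ y → f x ≤ f y)

/-- Pareto(α, θ) distribution, via its Lebesgue density α θ^α x^{-(α+1)} on [θ, ∞). -/
def pareto (α θ : ℝ) : Measure ℝ :=
  volume.withDensity
    (fun x => if θ ≤ x then ENNReal.ofReal (α * θ ^ α / x ^ (α + 1)) else 0)

/-- A monotone risk measure (w.r.t. stochastic order, on probability measures). -/
def MonotoneRisk (ρ : Measure ℝ → ℝ) : Prop :=
  ∀ F G : Measure ℝ, IsProbabilityMeasure F → IsProbabilityMeasure G →
    StOrder F G → ρ F ≤ ρ G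

/-- A risk measure consistent with convex order (on finite-mean probability measures). -/
def CxConsistentRisk (ρ : Measure ℝ → ℝ) : Prop :=
  ∀ F G : Measure ℝ, IsProbabilityMeasure F → IsProbabilityMeasure G →
    Integrable id F → Integrable id G → ConvexOrder F G → ρ F ≤ ρ G

/-- Uniform distribution on [a,b]. -/
def unifOn (a b : ℝ) : Measure ℝ :=
  (ENNReal.ofReal (b - a))⁻¹ • volume.restrict (Set.Icc a b)

/-- Bernoulli distribution with parameter p, as a measure on ℝ. -/
def bern (p : ℝ) : Measure ℝ :=
  ENNReal.ofReal (1 - p) • Measure.dirac (0 : ℝ) + ENNReal.ofReal p • Measure.dirac (1 : ℝ)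

/-- The set C(𝐅) of finite-mean distributions dominated by the comonotonic sum in convex order. -/
def CSet (n : ℕ) (F : Fin n → Measure ℝ) : Set (Measure ℝ) :=
  {G | IsProbabilityMeasure G ∧ Integrable id G ∧ ConvexOrder G (comonoSum n F)}


/-!
The sum of any coupling of `𝐅` has the same mean as the comonotonic sum `∑ Fᵢ⁻¹(U)` and smaller
stop-loss premiums `E (S - t)⁺`. Equal means and ordered stop-loss premiums give the convex order:
a convex `φ` is the pointwise limit of maxima of finitely many of its tangents, and each such
maximum is an affine function plus a nonnegative combination of the functions `(x - t)⁺`. Hence a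
convex-order consistent `ρ` is maximized over `Dₙ(𝐅)` at the comonotonic sum. The quantile function
of `∑ⱼ Λᵢⱼ Fⱼ⁻¹(U)` is `∑ⱼ Λᵢⱼ Fⱼ⁻¹` almost everywhere, so, the columns of `Λ` summing to `1`,
`Λ ⊗ 𝐅` has the same comonotonic sum as `𝐅`.
-/

open Set Filter Topology ProbabilityTheory

def rightTangent (φ : ℝ → ℝ) (t x : ℝ) : ℝ :=
  φ t + derivWithin φ (Ioi t) t * (x - t)

namespace ConvexOn

variable {φ : ℝ → ℝ} (hφ : ConvexOn ℝ univ φ)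
include hφ

lemma monotone_rightDeriv : Monotone fun x => derivWithin φ (Ioi x) x := by
  simpa using hφ.monotoneOn_rightDeriv

lemma slope_le_rightDeriv {x y : ℝ} (hxy : x < y) :
    slope φ x y ≤ derivWithin φ (Ioi y) y :=
  (hφ.slope_le_leftDeriv_of_mem_interior (mem_univ x) (by simp) hxy).trans
    (hφ.leftDeriv_le_rightDeriv_of_mem_interior (by simp))

lemma rightTangent_le (t x : ℝ) : rightTangent φ t x ≤ φ x := by
  unfold rightTangent
  rcases lt_trichotomy t x with htx | rfl | hxt
  · have h := hφ.rightDeriv_le_slope_of_mem_interior (by simp) (mem_univ x) htx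
    rw [slope_def_field, le_div_iff₀ (sub_pos.2 htx)] at h
    linarith
  · simp
  · have h := hφ.slope_le_rightDeriv hxt
    rw [slope_def_field, div_le_iff₀ (sub_pos.2 hxt)] at h
    linarith

lemma sub_rightTangent_le {t x : ℝ} (htx : t ≤ x) :
    φ x - rightTangent φ t x ≤
      (derivWithin φ (Ioi x) x - derivWithin φ (Ioi t) t) * (x - t) := by
  unfold rightTangent
  rcases htx.eq_or_lt with rfl | htx
  · simp
  · have h := hφ.slope_le_rightDeriv htx
    rw [slope_def_field, div_le_iff₀ (sub_pos.2 htx)] at h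
    linarith

lemma rightTangent_le_rightTangent_right {s t x : ℝ} (hst : s ≤ t) (htx : t ≤ x) :
    rightTangent φ s x ≤ rightTangent φ t x := by
  have h₁ := hφ.rightTangent_le s t
  have h₂ := mul_le_mul_of_nonneg_right (hφ.monotone_rightDeriv hst) (sub_nonneg.2 htx)
  unfold rightTangent at *
  nlinarith

lemma rightTangent_le_rightTangent_left {s t x : ℝ} (hxs : x ≤ s) (hst : s ≤ t) :
    rightTangent φ t x ≤ rightTangent φ s x := by
  have h₁ := hφ.rightTangent_le t s
  have h₂ := mul_le_mul_of_nonneg_right (hφ.monotone_rightDeriv hst) (sub_nonneg.2 hxs)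
  unfold rightTangent at *
  nlinarith

end ConvexOn

inductive IsStopLossCombination : (ℝ → ℝ) → Prop
  | affine (a b : ℝ) : IsStopLossCombination fun x => a * x + b
  | stopLoss (t : ℝ) : IsStopLossCombination fun x => max (x - t) 0
  | add {f g : ℝ → ℝ} :
      IsStopLossCombination f → IsStopLossCombination g → IsStopLossCombination (f + g)
  | smul {f : ℝ → ℝ} {c : ℝ} : 0 ≤ c → IsStopLossCombination f → IsStopLossCombination (c • f)

namespace IsStopLossCombination

lemma max_mul_add_zero {a b : ℝ} (ha : 0 ≤ a) :
    IsStopLossCombination fun x => max (a * x + b) 0 := by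
  rcases ha.eq_or_lt with rfl | ha
  · simpa using affine 0 (max b 0)
  · convert smul ha.le (stopLoss (-b / a)) using 1
    ext x
    simp only [Pi.smul_apply, smul_eq_mul]
    rw [mul_max_of_nonneg _ _ ha.le, mul_zero, mul_sub, mul_div_cancel₀ _ ha.ne']
    ring_nf

variable {f : ℝ → ℝ} {H K : Measure ℝ}

lemma integrable [IsFiniteMeasure H] (hH : Integrable id H) (hf : IsStopLossCombination f) :
    Integrable f H := by
  induction hf with
  | affine a b => exact (hH.const_mul a).add (integrable_const b)
  | stopLoss t => exact (hH.sub (integrable_const t)).pos_part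
  | add _ _ hf hg => exact hf.add hg
  | smul _ _ hf => exact hf.smul _

lemma integral_le [IsProbabilityMeasure H] [IsProbabilityMeasure K]
    (hH : Integrable id H) (hK : Integrable id K) (hmean : ∫ x, x ∂H = ∫ x, x ∂K)
    (hstop : ∀ t, ∫ x, max (x - t) 0 ∂H ≤ ∫ x, max (x - t) 0 ∂K)
    (hf : IsStopLossCombination f) :
    ∫ x, f x ∂H ≤ ∫ x, f x ∂K := by
  induction hf with
  | affine a b =>
    have hH' : Integrable (fun x => x) H := hH
    have hK' : Integrable (fun x => x) K := hK
    rw [integral_add (hH'.const_mul a) (integrable_const b),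
      integral_add (hK'.const_mul a) (integrable_const b),
      integral_const_mul, integral_const_mul, hmean]
    simp
  | stopLoss t => exact hstop t
  | add hf hg ihf ihg =>
    simp only [Pi.add_apply]
    rw [integral_add (hf.integrable hH) (hg.integrable hH),
      integral_add (hf.integrable hK) (hg.integrable hK)]
    exact add_le_add ihf ihg
  | smul hc _ ih =>
    simp only [Pi.smul_apply, smul_eq_mul]
    rw [integral_const_mul, integral_const_mul]
    exact mul_le_mul_of_nonneg_left ih hc

end IsStopLossCombination

lemma isStopLossCombination_rightTangent (φ : ℝ → ℝ) (t : ℝ) :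
    IsStopLossCombination (rightTangent φ t) := by
  convert IsStopLossCombination.affine (derivWithin φ (Ioi t) t)
    (φ t - derivWithin φ (Ioi t) t * t) using 1
  ext x
  unfold rightTangent
  ring

def tangentGrid (k : ℕ) : Finset ℝ :=
  (Finset.Icc (-((k : ℤ) + 1) ^ 2) (((k : ℤ) + 1) ^ 2)).image fun j : ℤ => (j : ℝ) / (k + 1)

lemma zero_mem_tangentGrid (k : ℕ) : (0 : ℝ) ∈ tangentGrid k :=
  Finset.mem_image.2 ⟨0, Finset.mem_Icc.2 ⟨by nlinarith, by positivity⟩, by simp⟩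

lemma exists_mem_tangentGrid {k : ℕ} {x : ℝ} (hx : |x| ≤ k) :
    ∃ t ∈ tangentGrid k, t ≤ x ∧ x - t ≤ 1 / (k + 1) := by
  have hk : (0 : ℝ) < k + 1 := by positivity
  set j := ⌊x * (k + 1)⌋
  have h₁ : (j : ℝ) ≤ x * (k + 1) := Int.floor_le _
  have h₂ : x * (k + 1) < j + 1 := Int.lt_floor_add_one _
  obtain ⟨hx₁, hx₂⟩ := abs_le.1 hx
  refine ⟨j / (k + 1), Finset.mem_image.2 ⟨j, Finset.mem_Icc.2 ⟨?_, ?_⟩, rfl⟩, ?_, ?_⟩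
  · have : (-((k : ℝ) + 1) ^ 2 : ℝ) ≤ j := by nlinarith
    exact_mod_cast this
  · have : (j : ℝ) ≤ ((k : ℝ) + 1) ^ 2 := by nlinarith
    exact_mod_cast this
  · rw [div_le_iff₀ hk]; exact h₁
  · rw [sub_le_iff_le_add, ← add_div, le_div_iff₀ hk]; linarith

def tangentApprox (φ : ℝ → ℝ) (k : ℕ) (x : ℝ) : ℝ :=
  (tangentGrid k).sup' ⟨0, zero_mem_tangentGrid k⟩ fun t => rightTangent φ t x

lemma rightTangent_zero_le_tangentApprox (φ : ℝ → ℝ) (k : ℕ) (x : ℝ) :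
    rightTangent φ 0 x ≤ tangentApprox φ k x :=
  Finset.le_sup' (fun t => rightTangent φ t x) (zero_mem_tangentGrid k)

namespace ConvexOn

variable {φ : ℝ → ℝ} (hφ : ConvexOn ℝ univ φ)
include hφ

/-- Adding a tangent at a point `a` to the right of `T` adds the stop-loss term
`(ℓₐ - ℓₘ)⁺`, `m = max T`: where `ℓₐ` wins, `x > m` and the old maximum is `ℓₘ`. -/
lemma isStopLossCombination_sup'_rightTangent (T : Finset ℝ) (hT : T.Nonempty) :
    IsStopLossCombination fun x => T.sup' hT fun t => rightTangent φ t x := by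
  classical
  induction T using Finset.induction_on_max with
  | empty => exact absurd hT Finset.not_nonempty_empty
  | insert a s has ih =>
    rcases s.eq_empty_or_nonempty with rfl | hs
    · simpa using isStopLossCombination_rightTangent φ a
    set m := s.max' hs
    have hma : m < a := has m (s.max'_mem hs)
    have key : ∀ x, (insert a s).sup' hT (fun t => rightTangent φ t x) =
        s.sup' hs (fun t => rightTangent φ t x) +
          max ((derivWithin φ (Ioi a) a - derivWithin φ (Ioi m) m) * x +
            (rightTangent φ a 0 - rightTangent φ m 0)) 0 := by
      intro x
      have hlin : (derivWithin φ (Ioi a) a - derivWithin φ (Ioi m) m) * x +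
          (rightTangent φ a 0 - rightTangent φ m 0) =
            rightTangent φ a x - rightTangent φ m x := by
        unfold rightTangent; ring
      have hm : rightTangent φ m x ≤ s.sup' hs (fun t => rightTangent φ t x) :=
        Finset.le_sup' (fun t => rightTangent φ t x) (s.max'_mem hs)
      rw [Finset.sup'_insert, hlin]
      rcases le_or_gt (rightTangent φ a x) (rightTangent φ m x) with hle | hlt
      · rw [max_eq_right (sub_nonpos.2 hle), add_zero]
        exact sup_eq_right.2 (hle.trans hm)
      · have hmx : m < x := by
          by_contra! hxm
          exact hlt.not_ge (hφ.rightTangent_le_rightTangent_left hxm hma.le)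
        have hsup : s.sup' hs (fun t => rightTangent φ t x) = rightTangent φ m x :=
          le_antisymm (Finset.sup'_le _ _ fun t ht =>
            hφ.rightTangent_le_rightTangent_right (s.le_max' t ht) hmx.le) hm
        rw [hsup, max_eq_left (sub_nonneg.2 hlt.le), sup_eq_left.2 hlt.le]
        ring
    simp_rw [key]
    exact (ih hs).add (IsStopLossCombination.max_mul_add_zero
      (sub_nonneg.2 (hφ.monotone_rightDeriv hma.le)))

lemma isStopLossCombination_tangentApprox (k : ℕ) :
    IsStopLossCombination (tangentApprox φ k) :=
  hφ.isStopLossCombination_sup'_rightTangent _ _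

lemma tangentApprox_le (k : ℕ) (x : ℝ) : tangentApprox φ k x ≤ φ x :=
  Finset.sup'_le _ _ fun t _ => hφ.rightTangent_le t x

lemma tendsto_tangentApprox (x : ℝ) :
    Tendsto (fun k => tangentApprox φ k x) atTop (𝓝 (φ x)) := by
  set D := fun y => derivWithin φ (Ioi y) y
  have hlow : ∀ᶠ k : ℕ in atTop,
      φ x - (D x - D (x - 1)) * (1 / (k + 1)) ≤ tangentApprox φ k x := by
    filter_upwards [eventually_ge_atTop ⌈|x|⌉₊] with k hk
    obtain ⟨t, ht, htx, hxt⟩ :=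
      exists_mem_tangentGrid ((Nat.le_ceil _).trans (by exact_mod_cast hk))
    have hδ : 1 / ((k : ℝ) + 1) ≤ 1 := by
      rw [div_le_one (by positivity)]; linarith [(k.cast_nonneg : (0 : ℝ) ≤ k)]
    have hDt : D x - D t ≤ D x - D (x - 1) :=
      sub_le_sub_left (hφ.monotone_rightDeriv (by linarith)) _
    have herr := hφ.sub_rightTangent_le htx
    have hprod : (D x - D t) * (x - t) ≤ (D x - D (x - 1)) * (1 / (k + 1)) :=
      mul_le_mul hDt hxt (sub_nonneg.2 htx)
        ((sub_nonneg.2 (hφ.monotone_rightDeriv htx)).trans hDt)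
    have hmem : rightTangent φ t x ≤ tangentApprox φ k x :=
      Finset.le_sup' (fun t => rightTangent φ t x) ht
    linarith
  have hlim : Tendsto (fun k : ℕ => φ x - (D x - D (x - 1)) * (1 / ((k : ℝ) + 1))) atTop
      (𝓝 (φ x)) := by
    simpa using tendsto_const_nhds.sub
      ((tendsto_one_div_add_atTop_nhds_zero_nat (𝕜 := ℝ)).const_mul (D x - D (x - 1)))
  exact tendsto_of_tendsto_of_tendsto_of_le_of_le' hlim tendsto_const_nhds hlow
    (Eventually.of_forall fun k => hφ.tangentApprox_le k x)

lemma tendsto_integral_tangentApprox {M : Measure ℝ} [IsProbabilityMeasure M]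
    (hM : Integrable id M) (hφM : Integrable φ M) :
    Tendsto (fun k => ∫ x, tangentApprox φ k x ∂M) atTop (𝓝 (∫ x, φ x ∂M)) := by
  refine tendsto_integral_of_dominated_convergence (fun x => |φ x| + |rightTangent φ 0 x|)
    (fun k => ((hφ.isStopLossCombination_tangentApprox k).integrable hM).aestronglyMeasurable)
    (hφM.abs.add ((isStopLossCombination_rightTangent φ 0).integrable hM).abs)
    (fun k => Eventually.of_forall fun x => ?_)
    (Eventually.of_forall hφ.tendsto_tangentApprox)
  have h₁ := hφ.tangentApprox_le k x
  have h₂ := rightTangent_zero_le_tangentApprox φ k x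
  rw [Real.norm_eq_abs, abs_le]
  constructor <;> linarith [le_abs_self (φ x), neg_abs_le (rightTangent φ 0 x), abs_nonneg (φ x),
    abs_nonneg (rightTangent φ 0 x)]

end ConvexOn

theorem convexOrder_of_integral_posPart_le {H K : Measure ℝ} [IsProbabilityMeasure H]
    [IsProbabilityMeasure K] (hH : Integrable id H) (hK : Integrable id K)
    (hmean : ∫ x, x ∂H = ∫ x, x ∂K)
    (hstop : ∀ t, ∫ x, max (x - t) 0 ∂H ≤ ∫ x, max (x - t) 0 ∂K) : ConvexOrder H K :=
  fun _ hφ hφH hφK =>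
    le_of_tendsto_of_tendsto' (hφ.tendsto_integral_tangentApprox hH hφH)
      (hφ.tendsto_integral_tangentApprox hK hφK)
      fun k => (hφ.isStopLossCombination_tangentApprox k).integral_le hH hK hmean hstop

instance : IsProbabilityMeasure uniform01 :=
  ⟨by simp [uniform01]⟩

lemma ae_mem_Ioo_uniform01 : ∀ᵐ u ∂uniform01, u ∈ Ioo (0 : ℝ) 1 :=
  ae_restrict_mem measurableSet_Ioo

lemma uniform01_Iic {v : ℝ} (hv : v ∈ Icc (0 : ℝ) 1) : uniform01 (Iic v) = ENNReal.ofReal v := by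
  rw [uniform01, Measure.restrict_apply measurableSet_Iic,
    measure_congr ((ae_eq_refl _).inter Ioo_ae_eq_Ioc), Iic_inter_Ioc_of_le hv.2,
    Real.volume_Ioc, sub_zero]

lemma uniform01_real_Ioi {p : ℝ} (hp : p ∈ Icc (0 : ℝ) 1) : uniform01.real (Ioi p) = 1 - p := by
  rw [← compl_Iic, measureReal_compl measurableSet_Iic, probReal_univ, measureReal_def,
    uniform01_Iic hp, ENNReal.toReal_ofReal hp.1]

section Quantile

variable {F : Measure ℝ} [IsProbabilityMeasure F] {p : ℝ}

lemma quantile_eq_sInf_cdf (F : Measure ℝ) [IsProbabilityMeasure F] (p : ℝ) :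
    quantile F p = sInf {x | p ≤ cdf F x} := by
  simp only [quantile, cdf_eq_real, measureReal_def]

lemma quantile_le_iff (hp : p ∈ Ioo 0 1) {x : ℝ} : quantile F p ≤ x ↔ p ≤ cdf F x := by
  set S := {x | p ≤ cdf F x}
  have hne : S.Nonempty := ((tendsto_cdf_atTop F).eventually (eventually_ge_nhds hp.2)).exists
  have hbdd : BddBelow S := by
    obtain ⟨y, hy⟩ :=
      ((tendsto_cdf_atBot F).eventually (eventually_lt_nhds hp.1)).exists_forall_of_atBot
    exact ⟨y, fun z hz => le_of_not_gt fun hzy => (hy z hzy.le).not_ge hz⟩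
  rw [quantile_eq_sInf_cdf]
  refine ⟨fun h => le_trans ?_ (monotone_cdf F h), fun h => csInf_le hbdd h⟩
  -- by right-continuity of the cdf, the infimum of `S` belongs to `S`
  by_contra! hlt
  have hev : ∀ᶠ y in 𝓝[>] sInf S, cdf F y < p :=
    ((cdf F).right_continuous _).mono Ioi_subset_Ici_self |>.tendsto.eventually
      (eventually_lt_nhds hlt)
  obtain ⟨y, hyp, hy⟩ := (hev.and self_mem_nhdsWithin).exists
  refine (le_csInf hne fun z hz => ?_).not_gt hy
  exact le_of_not_gt fun hzy => (monotone_cdf F hzy.le).not_gt (hyp.trans_le hz)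

lemma quantile_monotoneOn : MonotoneOn (quantile F) (Ioo 0 1) := fun _ hu _ hv huv =>
  (quantile_le_iff hu).2 (huv.trans ((quantile_le_iff hv).1 le_rfl))

lemma aemeasurable_quantile : AEMeasurable (quantile F) uniform01 :=
  aemeasurable_restrict_of_monotoneOn measurableSet_Ioo quantile_monotoneOn

lemma map_quantile_uniform01 : uniform01.map (quantile F) = F := by
  have := Measure.isProbabilityMeasure_map (aemeasurable_quantile (F := F))
  refine Measure.ext_of_Iic _ _ fun x => ?_
  have hae : quantile F ⁻¹' Iic x =ᵐ[uniform01] Iic (cdf F x) := by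
    filter_upwards [ae_mem_Ioo_uniform01] with u hu
    exact propext (quantile_le_iff hu)
  rw [Measure.map_apply_of_aemeasurable aemeasurable_quantile measurableSet_Iic,
    measure_congr hae, uniform01_Iic ⟨cdf_nonneg F x, cdf_le_one F x⟩, ofReal_cdf]

lemma integral_comp_quantile {f : ℝ → ℝ} (hf : AEStronglyMeasurable f F) :
    ∫ u, f (quantile F u) ∂uniform01 = ∫ y, f y ∂F := by
  have h := integral_map aemeasurable_quantile ((map_quantile_uniform01 (F := F)).symm ▸ hf)
  rw [map_quantile_uniform01] at h
  exact h.symm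

lemma integrable_comp_quantile {f : ℝ → ℝ} (hf : Integrable f F) :
    Integrable (fun u => f (quantile F u)) uniform01 := by
  rw [← map_quantile_uniform01 (F := F)] at hf
  exact (integrable_map_measure hf.1 aemeasurable_quantile).1 hf

end Quantile

lemma quantile_map_uniform01_eq {h : ℝ → ℝ} (hh : MonotoneOn h (Ioo 0 1)) {u : ℝ}
    (hu : u ∈ Ioo 0 1) (hc : ContinuousWithinAt h (Ioo 0 1 ∩ Iio u) u) :
    quantile (uniform01.map h) u = h u := by
  have hmeas : AEMeasurable h uniform01 :=
    aemeasurable_restrict_of_monotoneOn measurableSet_Ioo hh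
  have := Measure.isProbabilityMeasure_map hmeas
  have hcdf : ∀ y, ENNReal.ofReal (cdf (uniform01.map h) y) = uniform01 (h ⁻¹' Iic y) :=
    fun y => by rw [ofReal_cdf, Measure.map_apply_of_aemeasurable hmeas measurableSet_Iic]
  refine le_antisymm ((quantile_le_iff hu).2 ?_) (le_of_forall_lt fun y hy => ?_)
  · rw [← ENNReal.ofReal_le_ofReal_iff (cdf_nonneg _ _), hcdf,
      ← uniform01_Iic ⟨hu.1.le, hu.2.le⟩]
    refine measure_mono_ae ?_
    filter_upwards [ae_mem_Ioo_uniform01] with v hv hvu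
    exact hh hv hu hvu
  -- left-continuity gives `v < u` with `y < h v`, so `cdf y ≤ v < u`
  obtain ⟨v, hyv, hv, hvu⟩ : ∃ v, y < h v ∧ v ∈ Ioo 0 1 ∧ v < u := by
    have : (𝓝[Ioo 0 1 ∩ Iio u] u).NeBot := by
      rw [Ioo_inter_Iio, min_eq_right hu.2.le]; exact right_nhdsWithin_Ioo_neBot hu.1
    exact ((hc.eventually (lt_mem_nhds hy)).and self_mem_nhdsWithin).exists
  refine lt_of_not_ge fun hq => ?_
  have h₁ := (quantile_le_iff hu).1 hq
  rw [← ENNReal.ofReal_le_ofReal_iff (cdf_nonneg _ _), hcdf] at h₁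
  have h₂ : uniform01 (h ⁻¹' Iic y) ≤ uniform01 (Iic v) := by
    refine measure_mono_ae ?_
    filter_upwards [ae_mem_Ioo_uniform01] with w hw hwy
    exact le_of_not_gt fun hvw => (hh hv hw hvw.le |>.trans hwy).not_gt hyv
  rw [uniform01_Iic ⟨hv.1.le, hv.2.le⟩] at h₂
  exact ((ENNReal.ofReal_lt_ofReal_iff hu.1).2 hvu).not_ge (h₁.trans h₂)

lemma ae_quantile_map_uniform01_eq {h : ℝ → ℝ} (hh : MonotoneOn h (Ioo 0 1)) :
    ∀ᵐ u ∂uniform01, quantile (uniform01.map h) u = h u := by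
  filter_upwards [ae_mem_Ioo_uniform01,
    ae_restrict_of_ae (hh.countable_not_continuousWithinAt_Iio.ae_notMem volume)]
    with u hu hcont
  exact quantile_map_uniform01_eq hh hu (not_not.1 fun hc => hcont ⟨hu, hc⟩)

lemma posPart_sum_sub_le {ι : Type*} [Fintype ι] (x c : ι → ℝ) (t : ℝ) :
    max (∑ i, x i - t) 0 ≤
      ∑ i, max (x i - c i) 0 + if t < ∑ i, x i then ∑ i, c i - t else 0 := by
  have hsum : ∑ i, (x i - c i) ≤ ∑ i, max (x i - c i) 0 :=
    Finset.sum_le_sum fun i _ => le_max_left _ _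
  have hnonneg : 0 ≤ ∑ i, max (x i - c i) 0 := Finset.sum_nonneg fun i _ => le_max_right _ _
  rw [Finset.sum_sub_distrib] at hsum
  split_ifs with h
  · exact max_le (by linarith) (by linarith)
  · rw [max_eq_right (by linarith)]; linarith

lemma integral_sum_add_indicator_const {α ι : Type*} [MeasurableSpace α] [Fintype ι]
    {ν : Measure α} [IsFiniteMeasure ν] {f : ι → α → ℝ} (hf : ∀ i, Integrable (f i) ν)
    {B : Set α} (hB : MeasurableSet B) (C : ℝ) :
    ∫ a, (∑ i, f i a + B.indicator (fun _ => C) a) ∂ν = ∑ i, ∫ a, f i a ∂ν + ν.real B * C := by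
  rw [integral_add (integrable_finsetSum _ fun i _ => hf i) ((integrable_const C).indicator hB),
    integral_finsetSum _ fun i _ => hf i, integral_indicator_const _ hB, smul_eq_mul]

section Coupling

variable {n : ℕ} {F : Fin n → Measure ℝ} {μ : Measure (Fin n → ℝ)}

lemma integrable_comp_eval (hmarg : ∀ i, μ.map (fun x => x i) = F i) {f : ℝ → ℝ} {i : Fin n}
    (hf : Integrable f (F i)) : Integrable (fun x => f (x i)) μ :=
  (integrable_map_measure ((hmarg i).symm ▸ hf.1) (measurable_pi_apply i).aemeasurable).1
    ((hmarg i).symm ▸ hf)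

variable (hF : ∀ i, IsProbabilityMeasure (F i)) (hmarg : ∀ i, μ.map (fun x => x i) = F i)
include hF hmarg

lemma integral_comp_eval_eq_integral_comp_quantile {f : ℝ → ℝ} {i : Fin n}
    (hf : AEStronglyMeasurable f (F i)) :
    ∫ x, f (x i) ∂μ = ∫ u, f (quantile (F i) u) ∂uniform01 := by
  rw [integral_comp_quantile hf, ← hmarg i,
    integral_map (measurable_pi_apply i).aemeasurable ((hmarg i).symm ▸ hf)]

lemma integral_sum_eq_integral_sum_quantile (hFint : ∀ i, Integrable id (F i)) :
    ∫ x, ∑ i, x i ∂μ = ∫ u, ∑ i, quantile (F i) u ∂uniform01 := by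
  rw [integral_finsetSum _ fun i _ => integrable_comp_eval (f := fun y => y) hmarg (hFint i),
    integral_finsetSum _ fun i _ => integrable_comp_quantile (f := fun y => y) (hFint i)]
  exact Finset.sum_congr rfl fun i _ =>
    integral_comp_eval_eq_integral_comp_quantile hF hmarg (f := fun y => y)
      aestronglyMeasurable_id

/-- Put `q = μ{∑ xᵢ > t}` and `cᵢ = Fᵢ⁻¹(1 - q)`. Integrating `posPart_sum_sub_le` bounds the
left side by `∑ E(Fᵢ⁻¹(U) - cᵢ)⁺ + (∑ cᵢ - t) P(U > 1 - q)`, which is at most the right side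
because every `Fᵢ⁻¹(U) - cᵢ` has the sign of `U - (1 - q)`. -/
theorem integral_posPart_sum_sub_le [IsProbabilityMeasure μ] (hFint : ∀ i, Integrable id (F i))
    (t : ℝ) :
    ∫ x, max (∑ i, x i - t) 0 ∂μ ≤ ∫ u, max (∑ i, quantile (F i) u - t) 0 ∂uniform01 := by
  set A := {x : Fin n → ℝ | t < ∑ i, x i}
  have hA : MeasurableSet A :=
    measurableSet_lt measurable_const (Finset.measurable_sum _ fun i _ => measurable_pi_apply i)
  have hx : ∀ i, Integrable (fun x : Fin n → ℝ => x i) μ := fun i =>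
    integrable_comp_eval (f := fun y => y) hmarg (hFint i)
  have hg : Integrable (fun u => ∑ i, quantile (F i) u) uniform01 :=
    integrable_finsetSum _ fun i _ => integrable_comp_quantile (f := fun y => y) (hFint i)
  have hrhs : Integrable (fun u => max (∑ i, quantile (F i) u - t) 0) uniform01 :=
    (hg.sub (integrable_const t)).pos_part
  rcases (measureReal_nonneg : 0 ≤ μ.real A).eq_or_lt with hA0 | hA0
  · rw [eq_comm, measureReal_eq_zero_iff, measure_eq_zero_iff_ae_notMem] at hA0
    refine (integral_eq_zero_of_ae ?_).trans_le (integral_nonneg fun _ => le_max_right _ _)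
    filter_upwards [hA0] with x hx
    exact max_eq_right (sub_nonpos.2 (not_lt.1 hx))
  rcases (measureReal_le_one : μ.real A ≤ 1).eq_or_lt with hA1 | hA1
  · have hae : ∀ᵐ x ∂μ, x ∈ A := mem_ae_iff.2 ((prob_compl_eq_zero_iff hA).2
      ((ENNReal.toReal_eq_one_iff _).1 hA1))
    calc ∫ x, max (∑ i, x i - t) 0 ∂μ = ∫ x, (∑ i, x i - t) ∂μ :=
          integral_congr_ae (hae.mono fun x hx => max_eq_left (sub_nonneg.2 (le_of_lt hx)))
      _ = ∫ u, (∑ i, quantile (F i) u - t) ∂uniform01 := by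
          rw [integral_sub (integrable_finsetSum _ fun i _ => hx i) (integrable_const t),
            integral_sub hg (integrable_const t),
            integral_sum_eq_integral_sum_quantile hF hmarg hFint]
          simp
      _ ≤ _ := integral_mono (hg.sub (integrable_const t)) hrhs fun u => le_max_left _ _
  set p := 1 - μ.real A
  have hp : p ∈ Ioo (0 : ℝ) 1 := ⟨by linarith, by linarith⟩
  set c := fun i => quantile (F i) p
  set C := ∑ i, c i - t
  have hstop : ∀ i, Integrable (fun y => max (y - c i) 0) (F i) := fun i =>
    ((hFint i).sub (integrable_const (c i))).pos_part
  have hstopU : ∀ i, Integrable (fun u => max (quantile (F i) u - c i) 0) uniform01 := fun i =>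
    integrable_comp_quantile (hstop i)
  calc ∫ x, max (∑ i, x i - t) 0 ∂μ
      ≤ ∫ x, (∑ i, max (x i - c i) 0 + A.indicator (fun _ => C) x) ∂μ := by
        refine integral_mono ((integrable_finsetSum _ fun i _ => hx i).sub
          (integrable_const t)).pos_part ?_ fun x => ?_
        · exact (integrable_finsetSum _ fun i _ => integrable_comp_eval hmarg (hstop i)).add
            ((integrable_const C).indicator hA)
        · simpa only [indicator_apply, A, mem_ofPred_eq] using posPart_sum_sub_le x c t
    _ = ∑ i, ∫ x, max (x i - c i) 0 ∂μ + μ.real A * C :=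
        integral_sum_add_indicator_const (fun i => integrable_comp_eval hmarg (hstop i)) hA C
    _ = ∑ i, ∫ u, max (quantile (F i) u - c i) 0 ∂uniform01 + uniform01.real (Ioi p) * C := by
        rw [uniform01_real_Ioi ⟨hp.1.le, hp.2.le⟩, sub_sub_cancel]
        congr 1
        exact Finset.sum_congr rfl fun i _ =>
          integral_comp_eval_eq_integral_comp_quantile hF hmarg (hstop i).1
    _ = ∫ u, (∑ i, max (quantile (F i) u - c i) 0 + (Ioi p).indicator (fun _ => C) u)
          ∂uniform01 :=
        (integral_sum_add_indicator_const hstopU measurableSet_Ioi C).symm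
    _ ≤ ∫ u, max (∑ i, quantile (F i) u - t) 0 ∂uniform01 := by
        refine integral_mono_ae ((integrable_finsetSum _ fun i _ => hstopU i).add
          ((integrable_const C).indicator measurableSet_Ioi)) hrhs ?_
        filter_upwards [ae_mem_Ioo_uniform01] with u hu
        rcases le_or_gt u p with hup | hpu
        · have h0 : ∀ i, max (quantile (F i) u - c i) 0 = 0 := fun i =>
            max_eq_right (sub_nonpos.2 (quantile_monotoneOn hu hp hup))
          rw [indicator_of_notMem (show u ∉ Ioi p from not_lt.2 hup)]
          simp [h0]
        · have h1 : ∀ i, max (quantile (F i) u - c i) 0 = quantile (F i) u - c i := fun i =>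
            max_eq_left (sub_nonneg.2 (quantile_monotoneOn hp hu hpu.le))
          rw [Finset.sum_congr rfl fun i _ => h1 i, indicator_of_mem (show u ∈ Ioi p from hpu),
            Finset.sum_sub_distrib]
          exact le_of_eq_of_le (by ring) (le_max_left _ _)

end Coupling

section Comonotone

variable {n : ℕ} {F : Fin n → Measure ℝ} (hF : ∀ i, IsProbabilityMeasure (F i))
include hF

lemma aemeasurable_sum_quantile : AEMeasurable (fun u => ∑ i, quantile (F i) u) uniform01 :=
  Finset.aemeasurable_fun_sum _ fun _ _ => aemeasurable_quantile

lemma isProbabilityMeasure_comonoSum : IsProbabilityMeasure (comonoSum n F) :=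
  Measure.isProbabilityMeasure_map (aemeasurable_sum_quantile hF)

lemma integrable_id_comonoSum (hFint : ∀ i, Integrable id (F i)) :
    Integrable id (comonoSum n F) :=
  (integrable_map_measure aestronglyMeasurable_id (aemeasurable_sum_quantile hF)).2
    (integrable_finsetSum Finset.univ fun i _ =>
      integrable_comp_quantile (f := fun y => y) (hFint i))

lemma integral_comonoSum {f : ℝ → ℝ} (hf : Continuous f) :
    ∫ y, f y ∂comonoSum n F = ∫ u, f (∑ i, quantile (F i) u) ∂uniform01 :=
  integral_map (aemeasurable_sum_quantile hF) hf.aestronglyMeasurable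

lemma comonoSum_mem_aggSet : comonoSum n F ∈ aggSet n F := by
  have hq : AEMeasurable (fun u i => quantile (F i) u) uniform01 :=
    aemeasurable_pi_lambda _ fun _ => aemeasurable_quantile
  refine ⟨uniform01.map fun u i => quantile (F i) u, Measure.isProbabilityMeasure_map hq,
    fun i => ?_, ?_⟩
  · rw [AEMeasurable.map_map_of_aemeasurable (measurable_pi_apply i).aemeasurable hq]
    exact map_quantile_uniform01
  · rw [AEMeasurable.map_map_of_aemeasurable
      (Finset.measurable_sum _ fun i _ => measurable_pi_apply i).aemeasurable hq]
    rfl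

theorem convexOrder_comonoSum_of_mem_aggSet (hFint : ∀ i, Integrable id (F i)) {H : Measure ℝ}
    (hH : H ∈ aggSet n F) :
    IsProbabilityMeasure H ∧ Integrable id H ∧ ConvexOrder H (comonoSum n F) := by
  obtain ⟨μ, hμ, hmarg, rfl⟩ := hH
  have hS : Measurable fun x : Fin n → ℝ => ∑ i, x i :=
    Finset.measurable_sum _ fun i _ => measurable_pi_apply i
  have := isProbabilityMeasure_comonoSum hF
  have := Measure.isProbabilityMeasure_map (μ := μ) hS.aemeasurable
  have hint : Integrable id (μ.map fun x => ∑ i, x i) :=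
    (integrable_map_measure aestronglyMeasurable_id hS.aemeasurable).2
      (integrable_finsetSum Finset.univ fun i _ =>
        integrable_comp_eval (f := fun y => y) hmarg (hFint i))
  refine ⟨inferInstance, hint, convexOrder_of_integral_posPart_le hint
    (integrable_id_comonoSum hF hFint) ?_ fun t => ?_⟩
  · rw [integral_map (f := fun y => y) hS.aemeasurable aestronglyMeasurable_id,
      integral_comonoSum hF (f := fun y => y) continuous_id]
    exact integral_sum_eq_integral_sum_quantile hF hmarg hFint
  · rw [integral_map hS.aemeasurable (by fun_prop), integral_comonoSum hF (by fun_prop)]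
    exact integral_posPart_sum_sub_le hF hmarg hFint t

theorem worstCase_eq_comonoSum {ρ : Measure ℝ → ℝ} (hρ : CxConsistentRisk ρ)
    (hFint : ∀ i, Integrable id (F i)) :
    worstCase ρ n F = ((ρ (comonoSum n F) : ℝ) : EReal) := by
  refine IsGreatest.csSup_eq ⟨mem_image_of_mem _ (comonoSum_mem_aggSet hF), ?_⟩
  rintro _ ⟨H, hH, rfl⟩
  obtain ⟨hHp, hHint, hcx⟩ := convexOrder_comonoSum_of_mem_aggSet hF hFint hH
  exact EReal.coe_le_coe_iff.2 (hρ H _ hHp (isProbabilityMeasure_comonoSum hF) hHint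
    (integrable_id_comonoSum hF hFint) hcx)

end Comonotone

section QuantileMix

variable {n : ℕ} {F : Fin n → Measure ℝ} {Λ : Matrix (Fin n) (Fin n) ℝ}
  (hF : ∀ i, IsProbabilityMeasure (F i))
include hF

lemma monotoneOn_sum_mul_quantile (hΛ : ∀ i j, 0 ≤ Λ i j) (i : Fin n) :
    MonotoneOn (fun u => ∑ j, Λ i j * quantile (F j) u) (Ioo 0 1) := fun _ hu _ hv huv =>
  Finset.sum_le_sum fun j _ => mul_le_mul_of_nonneg_left (quantile_monotoneOn hu hv huv) (hΛ i j)

lemma aemeasurable_sum_mul_quantile (i : Fin n) :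
    AEMeasurable (fun u => ∑ j, Λ i j * quantile (F j) u) uniform01 :=
  Finset.aemeasurable_fun_sum _ fun _ _ => aemeasurable_quantile.const_mul _

lemma isProbabilityMeasure_quantileMix (i : Fin n) : IsProbabilityMeasure (quantileMix Λ F i) :=
  Measure.isProbabilityMeasure_map (aemeasurable_sum_mul_quantile hF i)

lemma integrable_id_quantileMix (hFint : ∀ i, Integrable id (F i)) (i : Fin n) :
    Integrable id (quantileMix Λ F i) :=
  (integrable_map_measure aestronglyMeasurable_id (aemeasurable_sum_mul_quantile hF i)).2
    (integrable_finsetSum Finset.univ fun j _ =>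
      (integrable_comp_quantile (f := fun y => y) (hFint j)).const_mul _)

lemma comonoSum_quantileMix (hΛ : DoublyStochastic Λ) :
    comonoSum n (quantileMix Λ F) = comonoSum n F := by
  refine Measure.map_congr ?_
  filter_upwards [ae_all_iff.2 fun i =>
    ae_quantile_map_uniform01_eq (monotoneOn_sum_mul_quantile hF hΛ.1 i)] with u hu
  simp only [quantileMix, hu]
  rw [Finset.sum_comm]
  exact Finset.sum_congr rfl fun j _ => by rw [← Finset.sum_mul, hΛ.2.2 j, one_mul]

end QuantileMix

/-- Proposition 4.3(ii): for a convex-order consistent risk measure,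
    ρ̄(𝐅) = ρ̄(Λ⊗𝐅) = ρ(F₁⊕⋯⊕Fₙ). -/
theorem stmt11 (n : ℕ) (ρ : Measure ℝ → ℝ) (hρ : CxConsistentRisk ρ)
    (F : Fin n → Measure ℝ) (hF : ∀ i, IsProbabilityMeasure (F i))
    (hFint : ∀ i, Integrable id (F i))
    (Λ : Matrix (Fin n) (Fin n) ℝ) (hΛ : DoublyStochastic Λ) :
    worstCase ρ n F = worstCase ρ n (quantileMix Λ F) ∧
      worstCase ρ n F = ((ρ (comonoSum n F) : ℝ) : EReal) := by
  have hcomono := worstCase_eq_comonoSum hF hρ hFint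
  refine ⟨?_, hcomono⟩
  rw [hcomono, worstCase_eq_comonoSum (isProbabilityMeasure_quantileMix hF) hρ
    (integrable_id_quantileMix hF hFint), comonoSum_quantileMix hF hΛ]

end
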